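/- Let 1 < p < 3 and 1 < ρ < 2/(p−1). Then there are constants C > 0 and c > 0 such that for all sufficiently large t > 0: e^{tΔ}⟨·⟩^{−ρ}(x) ≤ C if |x| ≤ t^{1/(ρ(p−1))}, e^{tΔ}⟨·⟩^{−ρ}(x) ≤ C|x|^{−ρ} if |x| ≥ t^{1/(ρ(p−1))}, and e^{tΔ}⟨·⟩^{−ρ}(x) ≥ c|x|^{−ρ} if |x| ≥ t^{1/(ρ(p−1))}. -/

import Mathlib

open Real MeasureTheory

/-- The one-dimensional heat semigroup `e^{tΔ}f(x) = (4πt)^{-1/2} ∫ e^{-y²/(4t)} f(x-y) dy`. -/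
noncomputable def heatSemigroup (t : ℝ) (f : ℝ → ℝ) (x : ℝ) : ℝ :=
  (4 * Real.pi * t) ^ (-(1:ℝ)/2) * ∫ y : ℝ, Real.exp (-y ^ 2 / (4 * t)) * f (x - y)

/-! The heat kernel has unit mass, which gives the bound `1`. For the upper bound at large `|x|`,
split the convolution at `|y| = |x| / 2`: on the inner part `⟨x - y⟩^{-ρ} ≤ 2^ρ |x|^{-ρ}`, and the
outer part is a Gaussian tail of size at most `√2 e^{-x²/(32t)}`. Where `|x| ≥ t^{1/γ}` with
`γ = ρ(p-1) < 2`, we have `x²/t ≥ |x|^{2-γ}`, so this tail decays faster than any power of `|x|`.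
For the lower bound, on `|y| ≤ √t ≤ |x|` the kernel is at least `e^{-1/4}` and
`⟨x - y⟩ ≤ √5 |x|`. -/

lemma exp_neg_sq_div_eq (c y : ℝ) : exp (-y ^ 2 / c) = exp (-c⁻¹ * y ^ 2) := by
  ring_nf

lemma integrable_exp_neg_sq_div {c : ℝ} (hc : 0 < c) :
    Integrable fun y : ℝ => exp (-y ^ 2 / c) := by
  simpa only [exp_neg_sq_div_eq] using integrable_exp_neg_mul_sq (inv_pos.2 hc)

lemma integral_exp_neg_sq_div (c : ℝ) : ∫ y : ℝ, exp (-y ^ 2 / c) = √(π * c) := by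
  simp only [exp_neg_sq_div_eq, integral_gaussian, div_inv_eq_mul]

lemma heatSemigroup_prefactor {t : ℝ} (ht : 0 ≤ t) :
    (4 * π * t) ^ (-(1:ℝ)/2) = (√(π * (4 * t)))⁻¹ := by
  rw [sqrt_eq_rpow, ← rpow_neg (by positivity), neg_div]
  ring_nf

lemma exp_neg_sq_div_le_mul_of_abs_le {t x y : ℝ} (ht : 0 < t) (h : |x| ≤ 2 * |y|) :
    exp (-y ^ 2 / (4 * t)) ≤ exp (-x ^ 2 / (32 * t)) * exp (-y ^ 2 / (8 * t)) := by
  have hxy : x ^ 2 ≤ 4 * y ^ 2 := by nlinarith [sq_abs x, sq_abs y, abs_nonneg x]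
  rw [← exp_add, exp_le_exp, div_add_div _ _ (by positivity) (by positivity),
    div_le_div_iff₀ (by positivity) (by positivity)]
  nlinarith [mul_pos ht ht]

section HeatSemigroupBounds

variable {t x : ℝ} {f : ℝ → ℝ}

lemma heatSemigroup_le_of_le {M : ℝ} (ht : 0 < t) (hfM : ∀ z, f z ≤ M)
    (hint : Integrable fun y => exp (-y ^ 2 / (4 * t)) * f (x - y)) :
    heatSemigroup t f x ≤ M := by
  have hgauss := integrable_exp_neg_sq_div (c := 4 * t) (by positivity)
  rw [heatSemigroup, heatSemigroup_prefactor ht.le, inv_mul_le_iff₀ (by positivity),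
    ← integral_exp_neg_sq_div, ← integral_mul_const]
  exact integral_mono hint (hgauss.mul_const M) fun y =>
    mul_le_mul_of_nonneg_left (hfM _) (exp_pos _).le

lemma heatSemigroup_le_add_exp {A : ℝ} (ht : 0 < t) (hA : 0 ≤ A) (hf1 : ∀ z, f z ≤ 1)
    (hfA : ∀ z, |x| / 2 ≤ |z| → f z ≤ A)
    (hint : Integrable fun y => exp (-y ^ 2 / (4 * t)) * f (x - y)) :
    heatSemigroup t f x ≤ A + √2 * exp (-x ^ 2 / (32 * t)) := by
  set B := exp (-x ^ 2 / (32 * t))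
  have hg4 := (integrable_exp_neg_sq_div (c := 4 * t) (by positivity)).const_mul A
  have hg8 := (integrable_exp_neg_sq_div (c := 8 * t) (by positivity)).const_mul B
  have hpointwise : ∀ y, exp (-y ^ 2 / (4 * t)) * f (x - y)
      ≤ A * exp (-y ^ 2 / (4 * t)) + B * exp (-y ^ 2 / (8 * t)) := by
    intro y
    rcases le_or_gt |y| (|x| / 2) with hy | hy
    · have hfar : |x| / 2 ≤ |x - y| := by linarith [abs_sub_abs_le_abs_sub x y]
      calc exp (-y ^ 2 / (4 * t)) * f (x - y) ≤ exp (-y ^ 2 / (4 * t)) * A :=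
            mul_le_mul_of_nonneg_left (hfA _ hfar) (exp_pos _).le
        _ ≤ A * exp (-y ^ 2 / (4 * t)) + B * exp (-y ^ 2 / (8 * t)) := by
            rw [mul_comm]
            exact le_add_of_nonneg_right (by positivity)
    · calc exp (-y ^ 2 / (4 * t)) * f (x - y) ≤ exp (-y ^ 2 / (4 * t)) :=
            mul_le_of_le_one_right (exp_pos _).le (hf1 _)
        _ ≤ B * exp (-y ^ 2 / (8 * t)) := exp_neg_sq_div_le_mul_of_abs_le ht (by linarith)
        _ ≤ A * exp (-y ^ 2 / (4 * t)) + B * exp (-y ^ 2 / (8 * t)) :=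
            le_add_of_nonneg_left (by positivity)
  have h8t : √(π * (8 * t)) = √2 * √(π * (4 * t)) := by
    rw [← sqrt_mul zero_le_two]
    ring_nf
  rw [heatSemigroup, heatSemigroup_prefactor ht.le, inv_mul_le_iff₀ (by positivity)]
  calc ∫ y, exp (-y ^ 2 / (4 * t)) * f (x - y)
      ≤ ∫ y, (A * exp (-y ^ 2 / (4 * t)) + B * exp (-y ^ 2 / (8 * t))) :=
        integral_mono hint (hg4.add hg8) hpointwise
    _ = √(π * (4 * t)) * (A + √2 * B) := by
        rw [integral_add hg4 hg8, integral_const_mul, integral_const_mul,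
          integral_exp_neg_sq_div, integral_exp_neg_sq_div, h8t]
        ring

lemma le_heatSemigroup_of_le {m : ℝ} (ht : 0 < t) (hm : 0 ≤ m) (hf0 : ∀ z, 0 ≤ f z)
    (hfm : ∀ y, |y| ≤ √t → m ≤ f (x - y))
    (hint : Integrable fun y => exp (-y ^ 2 / (4 * t)) * f (x - y)) :
    exp (-1 / 4) / √π * m ≤ heatSemigroup t f x := by
  have hpointwise : ∀ y ∈ Set.Icc (-√t) √t,
      exp (-1 / 4) * m ≤ exp (-y ^ 2 / (4 * t)) * f (x - y) := by
    intro y hy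
    have hy : |y| ≤ √t := abs_le.2 hy
    have hy2 : y ^ 2 ≤ t := by
      simpa only [sq_abs, sq_sqrt ht.le] using pow_le_pow_left₀ (abs_nonneg y) hy 2
    have hexp : exp (-1 / 4) ≤ exp (-y ^ 2 / (4 * t)) := by
      rw [exp_le_exp, div_le_div_iff₀ (by norm_num) (by positivity)]
      linarith
    exact mul_le_mul hexp (hfm y hy) hm (exp_pos _).le
  have hsqrt : √(π * (4 * t)) = 2 * √π * √t := by
    rw [mul_left_comm, sqrt_mul (by norm_num), sqrt_mul pi_pos.le,
      show (4 : ℝ) = 2 ^ 2 by norm_num, sqrt_sq zero_le_two, mul_assoc]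
  have hsqrt_pos : 0 < √t := sqrt_pos.2 ht
  rw [heatSemigroup, heatSemigroup_prefactor ht.le]
  calc exp (-1 / 4) / √π * m = (√(π * (4 * t)))⁻¹ * ((2 * √t) * (exp (-1 / 4) * m)) := by
        rw [hsqrt]
        field_simp
    _ = (√(π * (4 * t)))⁻¹ * ∫ _ in Set.Icc (-√t) √t, exp (-1 / 4) * m := by
        rw [setIntegral_const, measureReal_def, volume_Icc, ENNReal.toReal_ofReal (by linarith),
          smul_eq_mul, sub_neg_eq_add, two_mul]
    _ ≤ (√(π * (4 * t)))⁻¹ * ∫ y in Set.Icc (-√t) √t, exp (-y ^ 2 / (4 * t)) * f (x - y) := by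
        refine mul_le_mul_of_nonneg_left ?_ (inv_nonneg.2 (sqrt_nonneg _))
        exact setIntegral_mono_on (integrableOn_const (by simp)) hint.integrableOn
          measurableSet_Icc hpointwise
    _ ≤ (√(π * (4 * t)))⁻¹ * ∫ y, exp (-y ^ 2 / (4 * t)) * f (x - y) := by
        refine mul_le_mul_of_nonneg_left ?_ (inv_nonneg.2 (sqrt_nonneg _))
        exact setIntegral_le_integral hint (.of_forall fun y => mul_nonneg (exp_pos _).le (hf0 _))

end HeatSemigroupBounds

noncomputable def japaneseBracket (y : ℝ) : ℝ := (1 + y ^ 2) ^ ((1:ℝ)/2)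

lemma japaneseBracket_eq_sqrt (y : ℝ) : japaneseBracket y = √(1 + y ^ 2) :=
  (sqrt_eq_rpow _).symm

lemma continuous_japaneseBracket : Continuous japaneseBracket := by
  simp only [funext japaneseBracket_eq_sqrt]
  fun_prop

lemma one_le_japaneseBracket (y : ℝ) : 1 ≤ japaneseBracket y := by
  rw [japaneseBracket_eq_sqrt, one_le_sqrt]
  nlinarith [sq_nonneg y]

lemma japaneseBracket_pos (y : ℝ) : 0 < japaneseBracket y :=
  zero_lt_one.trans_le (one_le_japaneseBracket y)

lemma abs_le_japaneseBracket (y : ℝ) : |y| ≤ japaneseBracket y := by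
  rw [japaneseBracket_eq_sqrt, ← sqrt_sq_eq_abs]
  exact sqrt_le_sqrt (by linarith)

lemma japaneseBracket_le_of_abs_le {y r : ℝ} (hr : 1 ≤ r) (hy : |y| ≤ 2 * r) :
    japaneseBracket y ≤ √5 * r := by
  rw [japaneseBracket_eq_sqrt, ← sqrt_sq (by linarith : 0 ≤ r), ← sqrt_mul (by norm_num)]
  exact sqrt_le_sqrt (by nlinarith [sq_abs y, abs_nonneg y])

section JapaneseBracket

variable {ρ t x : ℝ}

lemma japaneseBracket_rpow_neg_le_one (hρ : 0 ≤ ρ) (y : ℝ) : japaneseBracket y ^ (-ρ) ≤ 1 :=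
  rpow_le_one_of_one_le_of_nonpos (one_le_japaneseBracket y) (neg_nonpos.2 hρ)

lemma integrable_exp_mul_japaneseBracket_rpow (ht : 0 < t) (hρ : 0 ≤ ρ) (x : ℝ) :
    Integrable fun y => exp (-y ^ 2 / (4 * t)) * japaneseBracket (x - y) ^ (-ρ) := by
  refine (integrable_exp_neg_sq_div (c := 4 * t) (by positivity)).mono' ?_ (.of_forall fun y => ?_)
  · have : Continuous fun y => japaneseBracket (x - y) ^ (-ρ) :=
      (continuous_japaneseBracket.comp (by fun_prop)).rpow_const
        fun y => .inl (japaneseBracket_pos (x - y)).ne'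
    exact ((by fun_prop : Continuous fun y : ℝ => exp (-y ^ 2 / (4 * t))).mul
      this).aestronglyMeasurable
  · rw [norm_of_nonneg (mul_nonneg (exp_pos _).le (rpow_pos_of_pos (japaneseBracket_pos _) _).le)]
    exact mul_le_of_le_one_right (exp_pos _).le (japaneseBracket_rpow_neg_le_one hρ _)

lemma heatSemigroup_japaneseBracket_le_one (hρ : 0 ≤ ρ) (ht : 0 < t) (x : ℝ) :
    heatSemigroup t (fun y => japaneseBracket y ^ (-ρ)) x ≤ 1 :=
  heatSemigroup_le_of_le ht (japaneseBracket_rpow_neg_le_one hρ)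
    (integrable_exp_mul_japaneseBracket_rpow ht hρ x)

lemma heatSemigroup_japaneseBracket_le (hρ : 0 ≤ ρ) (ht : 0 < t) (hx : x ≠ 0) :
    heatSemigroup t (fun y => japaneseBracket y ^ (-ρ)) x
      ≤ 2 ^ ρ * |x| ^ (-ρ) + √2 * exp (-x ^ 2 / (32 * t)) := by
  have hhalf : (|x| / 2) ^ (-ρ) = 2 ^ ρ * |x| ^ (-ρ) := by
    rw [div_rpow (abs_nonneg x) zero_le_two, rpow_neg zero_le_two, div_inv_eq_mul, mul_comm]
  rw [← hhalf]
  refine heatSemigroup_le_add_exp ht (by positivity) (japaneseBracket_rpow_neg_le_one hρ)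
    (fun z hz => ?_) (integrable_exp_mul_japaneseBracket_rpow ht hρ x)
  have hx0 : 0 < |x| / 2 := by positivity
  exact rpow_le_rpow_of_nonpos hx0 (hz.trans (abs_le_japaneseBracket z)) (neg_nonpos.2 hρ)

lemma le_heatSemigroup_japaneseBracket (hρ : 0 ≤ ρ) (ht : 0 < t) (hx1 : 1 ≤ |x|)
    (hxt : √t ≤ |x|) :
    exp (-1 / 4) / √π * √5 ^ (-ρ) * |x| ^ (-ρ)
      ≤ heatSemigroup t (fun y => japaneseBracket y ^ (-ρ)) x := by
  rw [mul_assoc, ← mul_rpow (sqrt_nonneg 5) (abs_nonneg x)]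
  refine le_heatSemigroup_of_le ht (by positivity)
    (fun z => (rpow_pos_of_pos (japaneseBracket_pos z) _).le) (fun y hy => ?_)
    (integrable_exp_mul_japaneseBracket_rpow ht hρ x)
  have hxy : |x - y| ≤ 2 * |x| := by linarith [abs_sub x y]
  exact rpow_le_rpow_of_nonpos (japaneseBracket_pos (x - y))
    (japaneseBracket_le_of_abs_le hx1 hxy) (neg_nonpos.2 hρ)

end JapaneseBracket

lemma exp_neg_le_factorial_div_pow {s : ℝ} (hs : 0 < s) (n : ℕ) :
    exp (-s) ≤ n.factorial / s ^ n := by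
  rw [exp_neg, ← inv_div]
  exact inv_anti₀ (by positivity) (pow_div_factorial_le_exp _ hs.le n)

lemma exists_exp_neg_mul_rpow_le {a β : ℝ} (ha : 0 < a) (hβ : 0 < β) (ρ : ℝ) :
    ∃ K > 0, ∀ r : ℝ, 1 ≤ r → exp (-(a * r ^ β)) ≤ K * r ^ (-ρ) := by
  set n := ⌈ρ / β⌉₊
  have hρn : ρ ≤ β * n := by
    have := Nat.le_ceil (ρ / β)
    rwa [div_le_iff₀ hβ, mul_comm] at this
  refine ⟨n.factorial / a ^ n, by positivity, fun r hr => ?_⟩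
  have hr0 : 0 < r := by linarith
  calc exp (-(a * r ^ β)) ≤ n.factorial / (a * r ^ β) ^ n :=
        exp_neg_le_factorial_div_pow (by positivity) n
    _ = n.factorial / a ^ n * r ^ (-(β * n)) := by
        rw [mul_pow, ← rpow_mul_natCast hr0.le, rpow_neg hr0.le]
        field_simp
    _ ≤ n.factorial / a ^ n * r ^ (-ρ) := by gcongr

theorem heat_japanese_bracket_bounds_general {p ρ : ℝ} (hp1 : 1 < p)
    (hρ1 : 1 < ρ) (hρ2 : ρ < 2 / (p - 1)) :
    ∃ C > (0:ℝ), ∃ c > (0:ℝ), ∃ T : ℝ, ∀ t : ℝ, T ≤ t → ∀ x : ℝ,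
      (|x| ≤ t ^ (1 / (ρ * (p - 1))) →
        heatSemigroup t (fun y => ((1 + y ^ 2) ^ ((1:ℝ)/2)) ^ (-ρ)) x ≤ C) ∧
      (t ^ (1 / (ρ * (p - 1))) ≤ |x| →
        heatSemigroup t (fun y => ((1 + y ^ 2) ^ ((1:ℝ)/2)) ^ (-ρ)) x ≤ C * |x| ^ (-ρ) ∧
        c * |x| ^ (-ρ) ≤ heatSemigroup t (fun y => ((1 + y ^ 2) ^ ((1:ℝ)/2)) ^ (-ρ)) x) := by
  set γ := ρ * (p - 1)
  have hρ : 0 ≤ ρ := by linarith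
  have hγ : 0 < γ := mul_pos (by linarith) (sub_pos.2 hp1)
  have hγ2 : γ < 2 := (lt_div_iff₀ (sub_pos.2 hp1)).1 hρ2
  obtain ⟨K, hK, hdecay⟩ := exists_exp_neg_mul_rpow_le (a := 32⁻¹) (by norm_num) (sub_pos.2 hγ2) ρ
  refine ⟨1 + 2 ^ ρ + √2 * K, by positivity, exp (-1 / 4) / √π * √5 ^ (-ρ), by positivity, 1,
    fun t ht x => ⟨fun _ => ?_, fun hxt => ?_⟩⟩
  · have := heatSemigroup_japaneseBracket_le_one hρ (by linarith : (0:ℝ) < t) x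
    exact this.trans (by linarith [rpow_pos_of_pos two_pos ρ, mul_pos (sqrt_pos.2 two_pos) hK])
  have hsqrt : √t ≤ |x| := by
    refine le_trans ?_ hxt
    rw [sqrt_eq_rpow]
    exact rpow_le_rpow_of_exponent_le ht (one_div_le_one_div_of_le hγ hγ2.le)
  have hx1 : 1 ≤ |x| := (one_le_sqrt.2 ht).trans hsqrt
  have htx : t ≤ |x| ^ γ := by
    rwa [one_div, rpow_inv_le_iff_of_pos (by linarith) (abs_nonneg x) hγ] at hxt
  have htail : exp (-x ^ 2 / (32 * t)) ≤ K * |x| ^ (-ρ) := by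
    refine le_trans (exp_le_exp.2 ?_) (hdecay |x| hx1)
    rw [rpow_sub (by linarith), rpow_two, sq_abs, neg_div, neg_le_neg_iff, inv_mul_eq_div,
      div_div]
    gcongr x ^ 2 / ?_
    linarith
  refine ⟨?_, le_heatSemigroup_japaneseBracket hρ (by linarith) hx1 hsqrt⟩
  have hxρ : 0 < |x| ^ (-ρ) := rpow_pos_of_pos (by linarith) _
  calc _ ≤ 2 ^ ρ * |x| ^ (-ρ) + √2 * exp (-x ^ 2 / (32 * t)) :=
        heatSemigroup_japaneseBracket_le hρ (by linarith) (abs_pos.1 (by linarith))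
    _ ≤ 2 ^ ρ * |x| ^ (-ρ) + √2 * (K * |x| ^ (-ρ)) := by gcongr
    _ ≤ (1 + 2 ^ ρ + √2 * K) * |x| ^ (-ρ) := by nlinarith

theorem heat_japanese_bracket_bounds {p ρ : ℝ} (hp1 : 1 < p) (hp3 : p < 3)
    (hρ1 : 1 < ρ) (hρ2 : ρ < 2 / (p - 1)) :
    ∃ C > (0:ℝ), ∃ c > (0:ℝ), ∃ T : ℝ, ∀ t : ℝ, T ≤ t → ∀ x : ℝ,
      (|x| ≤ t ^ (1 / (ρ * (p - 1))) →
        heatSemigroup t (fun y => ((1 + y ^ 2) ^ ((1:ℝ)/2)) ^ (-ρ)) x ≤ C) ∧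
      (t ^ (1 / (ρ * (p - 1))) ≤ |x| →
        heatSemigroup t (fun y => ((1 + y ^ 2) ^ ((1:ℝ)/2)) ^ (-ρ)) x ≤ C * |x| ^ (-ρ) ∧
        c * |x| ^ (-ρ) ≤ heatSemigroup t (fun y => ((1 + y ^ 2) ^ ((1:ℝ)/2)) ^ (-ρ)) x) :=
  heat_japanese_bracket_bounds_general hp1 hρ1 hρ2
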